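/- Let λ be a real number with 2λ ∉ ℤ, set μ = 2 − λ and fix ω ≠ 0. Let (x, y) be a pair of functions analytic on an open interval J ⊆ ℝ satisfying the normal-form Fuchsian system on J. Then for every integer k ≥ 1 there exist real polynomials p, q, r, u, each of degree at most k − 1, such that the functions x_k(t) = (t^k + p(t))·x(t) + q(t)·y(t) and y_k(t) = r(t)·x(t) + (t^k + u(t))·y(t) satisfy t(t−1)·x_k″(t) = (k+λ)(k+λ−1)·x_k(t) and t(t−1)·y_k″(t) = (k+μ)(k+μ−1)·y_k(t) for all t ∈ J. -/

import Mathlib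

open Polynomial

noncomputable section

/-- The real normal-form Fuchsian system with parameters `lam` (λ), `2 - lam` (μ) and
`om` (ω), at the point `t`. -/
def RealFuchsSys (lam om : ℝ) (x y : ℝ → ℝ) (t : ℝ) : Prop :=
  x t = ((2 * t - 1) / (2 * lam)) * deriv x t + (om / (2 * lam)) * deriv y t ∧
  y t = (1 / (2 * (2 - lam) * om)) * deriv x t
      + ((2 * t - 1) / (2 * (2 - lam))) * deriv y t

/-- Ladder construction for the pair-form Fuchsian system. -/
private lemma fuchs_ladder (lam mu : ℝ) (J : Set ℝ) (hJ : IsOpen J) (x y : ℝ → ℝ)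
    (hx : AnalyticOnNhd ℝ x J) (hy : AnalyticOnNhd ℝ y J)
    (hM1 : ∀ t ∈ J, 2 * lam * x t = (2 * t - 1) * deriv x t + deriv y t)
    (hM2 : ∀ t ∈ J, 2 * mu * y t = deriv x t + (2 * t - 1) * deriv y t)
    (hsum : lam + mu = 2)
    (hne : ∀ j : ℕ, 2 * lam + 2 * (j : ℝ) - 1 ≠ 0)
    (k : ℕ) (hk : 1 ≤ k) :
    ∃ p q : ℝ[X], p.natDegree ≤ k - 1 ∧ q.natDegree ≤ k - 1 ∧
      ∀ t ∈ J, t * (t - 1) *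
          deriv (deriv (fun s : ℝ => (s ^ k + p.eval s) * x s + q.eval s * y s)) t
        = ((k : ℝ) + lam) * ((k : ℝ) + lam - 1) *
            ((t ^ k + p.eval t) * x t + q.eval t * y t) := by
  -- the first-order relations with polynomial coefficients
  have hE1 : ∀ t ∈ J, t * (t - 1) * deriv x t
      = lam / 2 * (2 * t - 1) * x t + (-(mu / 2)) * y t := by
    intro t ht
    linear_combination (1 / 4) * hM2 t ht - (2 * t - 1) / 4 * hM1 t ht
  have hE2 : ∀ t ∈ J, t * (t - 1) * deriv y t
      = (-(lam / 2)) * x t + mu / 2 * (2 * t - 1) * y t := by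
    intro t ht
    linear_combination (1 / 4) * hM1 t ht - (2 * t - 1) / 4 * hM2 t ht
  -- analyticity helpers
  have hpa : ∀ p : ℝ[X], AnalyticOnNhd ℝ (fun s : ℝ => p.eval s) J := fun p =>
    (AnalyticOnNhd.eval_polynomial (𝕜 := ℝ) p).mono (Set.subset_univ J)
  have hW : ∀ a b : ℝ[X], AnalyticOnNhd ℝ (fun s : ℝ => a.eval s * x s + b.eval s * y s) J :=
    fun a b => ((hpa a).mul hx).add ((hpa b).mul hy)
  have hdw : ∀ (a b : ℝ[X]) (t : ℝ), t ∈ J →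
      HasDerivAt (fun s : ℝ => a.eval s * x s + b.eval s * y s)
        (deriv (fun s : ℝ => a.eval s * x s + b.eval s * y s) t) t :=
    fun a b t ht => ((hW a b) t ht).differentiableAt.hasDerivAt
  have hddw : ∀ (a b : ℝ[X]) (t : ℝ), t ∈ J →
      HasDerivAt (deriv (fun s : ℝ => a.eval s * x s + b.eval s * y s))
        (deriv (deriv (fun s : ℝ => a.eval s * x s + b.eval s * y s)) t) t :=
    fun a b t ht => (((hW a b).deriv) t ht).differentiableAt.hasDerivAt
  -- base second-order equation
  have hB : ∀ t ∈ J, t * (t - 1) * deriv (deriv x) t = lam * (lam - 1) * x t := by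
    intro t ht
    have heq : deriv (fun s : ℝ => s * (s - 1) * deriv x s) t
        = deriv (fun s : ℝ => lam / 2 * (2 * s - 1) * x s + (-(mu / 2)) * y s) t :=
      Filter.EventuallyEq.deriv_eq (Filter.eventuallyEq_of_mem (hJ.mem_nhds ht) hE1)
    have hdx : HasDerivAt x (deriv x t) t := ((hx t ht).differentiableAt).hasDerivAt
    have hdy : HasDerivAt y (deriv y t) t := ((hy t ht).differentiableAt).hasDerivAt
    have hddx : HasDerivAt (deriv x) (deriv (deriv x) t) t :=
      ((hx.deriv t ht).differentiableAt).hasDerivAt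
    have hc2 : HasDerivAt (fun s : ℝ => s * (s - 1)) (1 * (t - 1) + t * 1) t :=
      (hasDerivAt_id t).mul ((hasDerivAt_id t).sub_const 1)
    have hc1 : HasDerivAt (fun s : ℝ => lam / 2 * (2 * s - 1)) (lam / 2 * 2) t := by
      simpa using (((hasDerivAt_id t).const_mul 2).sub_const 1).const_mul (lam / 2)
    have hL : HasDerivAt (fun s : ℝ => s * (s - 1) * deriv x s)
        ((1 * (t - 1) + t * 1) * deriv x t + t * (t - 1) * deriv (deriv x) t) t :=
      hc2.mul hddx
    have hR : HasDerivAt (fun s : ℝ => lam / 2 * (2 * s - 1) * x s + (-(mu / 2)) * y s)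
        ((lam / 2 * 2) * x t + lam / 2 * (2 * t - 1) * deriv x t
          + (-(mu / 2)) * deriv y t) t :=
      (hc1.mul hdx).add (hdy.const_mul (-(mu / 2)))
    rw [hL.deriv, hR.deriv] at heq
    linear_combination heq + mu / 2 * hM1 t ht + ((2 * t - 1) * deriv x t / 2 - lam * x t) * hsum
  -- the combined first-derivative formula
  have hD : ∀ (a b : ℝ[X]) (t : ℝ), t ∈ J →
      t * (t - 1) * deriv (fun s : ℝ => a.eval s * x s + b.eval s * y s) t
        = (t * (t - 1) * (derivative a).eval t + lam / 2 * (2 * t - 1) * a.eval t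
            + (-(lam / 2)) * b.eval t) * x t
          + (t * (t - 1) * (derivative b).eval t + mu / 2 * (2 * t - 1) * b.eval t
            + (-(mu / 2)) * a.eval t) * y t := by
    intro a b t ht
    have hxd := ((hx t ht).differentiableAt).hasDerivAt
    have hyd := ((hy t ht).differentiableAt).hasDerivAt
    have h0 : deriv (fun s : ℝ => a.eval s * x s + b.eval s * y s) t
        = (derivative a).eval t * x t + a.eval t * deriv x t
          + ((derivative b).eval t * y t + b.eval t * deriv y t) :=
      (((a.hasDerivAt t).mul hxd).add ((b.hasDerivAt t).mul hyd)).deriv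
    rw [h0]
    linear_combination a.eval t * hE1 t ht + b.eval t * hE2 t ht
  -- leading coefficient product
  set g : ℕ → ℝ := fun n => ∏ j ∈ Finset.range n, (2 * lam + 2 * (j : ℝ) - 1) with hgdef
  have hgsucc : ∀ n : ℕ, g (n + 1) = (2 * lam + 2 * (n : ℝ) - 1) * g n := by
    intro n; rw [hgdef]; simp only [Finset.prod_range_succ]; ring
  have hgne : ∀ n : ℕ, g n ≠ 0 := by
    intro n; rw [hgdef]
    exact Finset.prod_ne_zero_iff.2 fun j _ => hne j
  -- the key induction
  have key : ∀ n : ℕ, ∃ a b : ℝ[X],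
      a.coeff n = g n ∧ (∀ m : ℕ, n < m → a.coeff m = 0) ∧ (∀ m : ℕ, n ≤ m → b.coeff m = 0) ∧
      ∀ t ∈ J, t * (t - 1) * deriv (deriv (fun s : ℝ => a.eval s * x s + b.eval s * y s)) t
        = (lam + (n : ℝ)) * (lam + (n : ℝ) - 1) * (a.eval t * x t + b.eval t * y t) := by
    intro n
    induction n with
    | zero =>
      refine ⟨1, 0, by simp [hgdef], ?_, fun m _ => by simp, ?_⟩
      · intro m hm
        rw [coeff_one, if_neg (by omega)]
      · intro t ht
        have h0 : (fun s : ℝ => (1 : ℝ[X]).eval s * x s + (0 : ℝ[X]).eval s * y s) = x := by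
          funext s; simp
        rw [h0]
        simp only [eval_one, eval_zero, one_mul, zero_mul, add_zero, Nat.cast_zero]
        linear_combination hB t ht
    | succ n ih =>
      obtain ⟨a, b, hak, ha0, hb0, hIH⟩ := ih
      set a2 : ℝ[X] := derivative a * X ^ 2 - derivative a * X ^ 1
          + C (lam + 2 * ((lam + (n : ℝ) - 1) / 2)) * (a * X ^ 1)
          - C (lam / 2 + (lam + (n : ℝ) - 1) / 2) * a + C (-(lam / 2)) * b with ha2def
      set b2 : ℝ[X] := derivative b * X ^ 2 - derivative b * X ^ 1
          + C (mu + 2 * ((lam + (n : ℝ) - 1) / 2)) * (b * X ^ 1)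
          - C (mu / 2 + (lam + (n : ℝ) - 1) / 2) * b + C (-(mu / 2)) * a with hb2def
      have hW1 : ∀ s ∈ J, a2.eval s * x s + b2.eval s * y s
          = (lam + (n : ℝ) - 1) / 2 * (2 * s - 1)
              * (a.eval s * x s + b.eval s * y s)
            + s * (s - 1) * deriv (fun u : ℝ => a.eval u * x u + b.eval u * y u) s := by
        intro s hs
        have hds := hD a b s hs
        simp only [ha2def, hb2def, eval_add, eval_sub, eval_mul, eval_C, eval_X, eval_pow]
        linear_combination -hds
      refine ⟨a2, b2, ?_, ?_, ?_, ?_⟩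
      · -- leading coefficient
        simp only [ha2def, coeff_add, coeff_sub, coeff_C_mul, coeff_mul_X_pow',
          coeff_derivative]
        rw [hgsucc]
        rcases Nat.eq_zero_or_pos n with hn | hn
        · subst hn
          rw [if_neg (by omega), if_pos (by omega), if_pos (by omega)]
          norm_num
          rw [ha0 1 (by omega), hb0 1 (by omega), hak]
          ring
        · rw [if_pos (by omega : 2 ≤ n + 1), if_pos (by omega : 1 ≤ n + 1),
            if_pos (by omega : 1 ≤ n + 1)]
          rw [(by omega : n + 1 - 2 + 1 = n), (by omega : n + 1 - 1 + 1 = n + 1),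
            (by omega : n + 1 - 1 = n)]
          rw [ha0 (n + 1) (by omega), hb0 (n + 1) (by omega), hak]
          rw [(by omega : n + 1 - 2 = n - 1), Nat.cast_sub hn]
          push_cast
          ring
      · -- degree bound for a2
        intro m hm
        simp only [ha2def, coeff_add, coeff_sub, coeff_C_mul, coeff_mul_X_pow',
          coeff_derivative]
        rw [if_pos (by omega : 2 ≤ m), if_pos (by omega : 1 ≤ m), if_pos (by omega : 1 ≤ m)]
        rw [ha0 (m - 2 + 1) (by omega), ha0 (m - 1 + 1) (by omega), ha0 (m - 1) (by omega),
          ha0 m (by omega), hb0 m (by omega)]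
        ring
      · -- degree bound for b2
        intro m hm
        simp only [hb2def, coeff_add, coeff_sub, coeff_C_mul, coeff_mul_X_pow',
          coeff_derivative]
        by_cases h2 : 2 ≤ m
        · rw [if_pos h2, if_pos (by omega : 1 ≤ m), if_pos (by omega : 1 ≤ m)]
          rw [hb0 (m - 2 + 1) (by omega), hb0 (m - 1 + 1) (by omega), hb0 (m - 1) (by omega),
            hb0 m (by omega), ha0 m (by omega)]
          ring
        · rw [if_neg h2, if_pos (by omega : 1 ≤ m), if_pos (by omega : 1 ≤ m)]
          rw [hb0 (m - 1 + 1) (by omega), hb0 (m - 1) (by omega),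
            hb0 m (by omega), ha0 m (by omega)]
          ring
      · -- the second-order equation at level n+1
        intro t ht
        -- first derivative of the new combination, valid on all of J
        have hw1' : ∀ s ∈ J, deriv (fun u : ℝ => a2.eval u * x u + b2.eval u * y u) s
            = ((lam + (n : ℝ) - 1) + (lam + (n : ℝ)) * (lam + (n : ℝ) - 1))
                * (a.eval s * x s + b.eval s * y s)
              + (((lam + (n : ℝ) - 1) / 2 + 1) * (2 * s - 1))
                * deriv (fun u : ℝ => a.eval u * x u + b.eval u * y u) s := by
          intro s hs
          have heq : deriv (fun u : ℝ => a2.eval u * x u + b2.eval u * y u) s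
              = deriv (fun u : ℝ => (lam + (n : ℝ) - 1) / 2 * (2 * u - 1)
                    * (a.eval u * x u + b.eval u * y u)
                  + u * (u - 1) * deriv (fun v : ℝ => a.eval v * x v + b.eval v * y v) u) s :=
            Filter.EventuallyEq.deriv_eq (Filter.eventuallyEq_of_mem (hJ.mem_nhds hs) hW1)
          have hc1 : HasDerivAt (fun u : ℝ => (lam + (n : ℝ) - 1) / 2 * (2 * u - 1))
              ((lam + (n : ℝ) - 1) / 2 * 2) s := by
            simpa using (((hasDerivAt_id s).const_mul 2).sub_const 1).const_mul
              ((lam + (n : ℝ) - 1) / 2)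
          have hc2 : HasDerivAt (fun u : ℝ => u * (u - 1)) (1 * (s - 1) + s * 1) s :=
            (hasDerivAt_id s).mul ((hasDerivAt_id s).sub_const 1)
          have hR := (hc1.mul (hdw a b s hs)).add (hc2.mul (hddw a b s hs))
          have hRd := hR.deriv
          simp only [Pi.add_def, Pi.mul_def] at hRd
          rw [heq, hRd]
          linear_combination hIH s hs
        -- second derivative
        have heq2 : deriv (deriv (fun u : ℝ => a2.eval u * x u + b2.eval u * y u)) t
            = deriv (fun u : ℝ =>
                ((lam + (n : ℝ) - 1) + (lam + (n : ℝ)) * (lam + (n : ℝ) - 1))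
                  * (a.eval u * x u + b.eval u * y u)
                + (((lam + (n : ℝ) - 1) / 2 + 1) * (2 * u - 1))
                  * deriv (fun v : ℝ => a.eval v * x v + b.eval v * y v) u) t :=
          Filter.EventuallyEq.deriv_eq (Filter.eventuallyEq_of_mem (hJ.mem_nhds ht) hw1')
        have hc3 : HasDerivAt (fun u : ℝ => ((lam + (n : ℝ) - 1) / 2 + 1) * (2 * u - 1))
            (((lam + (n : ℝ) - 1) / 2 + 1) * 2) t := by
          simpa using (((hasDerivAt_id t).const_mul 2).sub_const 1).const_mul
            ((lam + (n : ℝ) - 1) / 2 + 1)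
        have hR2 := ((hdw a b t ht).const_mul
            ((lam + (n : ℝ) - 1) + (lam + (n : ℝ)) * (lam + (n : ℝ) - 1))).add
          (hc3.mul (hddw a b t ht))
        have hR2d := hR2.deriv
        simp only [Pi.add_def, Pi.mul_def] at hR2d
        rw [heq2, hR2d]
        push_cast
        linear_combination (((lam + (n : ℝ) - 1) / 2 + 1) * (2 * t - 1)) * hIH t ht
          - ((lam + (n : ℝ) + 1) * (lam + (n : ℝ))) * hW1 t ht
  -- normalize the leading coefficient
  obtain ⟨a, b, hak, ha0, hb0, hkey⟩ := key k
  refine ⟨C (g k)⁻¹ * a - X ^ k, C (g k)⁻¹ * b, ?_, ?_, ?_⟩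
  · rw [natDegree_le_iff_coeff_eq_zero]
    intro N hN
    rw [coeff_sub, coeff_C_mul, coeff_X_pow]
    rcases eq_or_lt_of_le (show k ≤ N by omega) with h | h
    · rw [← h, hak, if_pos rfl, inv_mul_cancel₀ (hgne k), sub_self]
    · rw [ha0 N h, if_neg (by omega), mul_zero, sub_zero]
  · rw [natDegree_le_iff_coeff_eq_zero]
    intro N hN
    rw [coeff_C_mul, hb0 N (by omega), mul_zero]
  · intro t ht
    have hfun : (fun s : ℝ => (s ^ k + (C (g k)⁻¹ * a - X ^ k).eval s) * x s
          + (C (g k)⁻¹ * b).eval s * y s)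
        = fun s : ℝ => (g k)⁻¹ * (a.eval s * x s + b.eval s * y s) := by
      funext s
      simp only [eval_sub, eval_mul, eval_C, eval_pow, eval_X]
      ring
    rw [hfun]
    have hder : deriv (fun s : ℝ => (g k)⁻¹ * (a.eval s * x s + b.eval s * y s))
        = fun s : ℝ => (g k)⁻¹ * deriv (fun u : ℝ => a.eval u * x u + b.eval u * y u) s := by
      funext s
      exact deriv_const_mul_field _
    rw [hder]
    have hder2 : deriv (fun s : ℝ =>
          (g k)⁻¹ * deriv (fun u : ℝ => a.eval u * x u + b.eval u * y u) s) t
        = (g k)⁻¹ * deriv (deriv (fun u : ℝ => a.eval u * x u + b.eval u * y u)) t :=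
      deriv_const_mul_field _
    rw [hder2]
    simp only [eval_sub, eval_mul, eval_C, eval_pow, eval_X]
    linear_combination (g k)⁻¹ * hkey t ht

theorem eigenfunction_construction (lam om : ℝ)
    (hlam : ∀ m : ℤ, (m : ℝ) ≠ 2 * lam) (hom : om ≠ 0)
    (J : Set ℝ) (hJopen : IsOpen J) (hJconn : J.OrdConnected)
    (x y : ℝ → ℝ)
    (hx : AnalyticOnNhd ℝ x J) (hy : AnalyticOnNhd ℝ y J)
    (hsys : ∀ t ∈ J, RealFuchsSys lam om x y t) :
    ∀ k : ℕ, 1 ≤ k →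
      ∃ p q r u : Polynomial ℝ,
        p.natDegree ≤ k - 1 ∧ q.natDegree ≤ k - 1 ∧
        r.natDegree ≤ k - 1 ∧ u.natDegree ≤ k - 1 ∧
        (∀ t ∈ J,
          t * (t - 1) *
            deriv (deriv (fun s : ℝ => (s ^ k + p.eval s) * x s + q.eval s * y s)) t
          = ((k : ℝ) + lam) * ((k : ℝ) + lam - 1) *
              ((t ^ k + p.eval t) * x t + q.eval t * y t)) ∧
        (∀ t ∈ J,
          t * (t - 1) *
            deriv (deriv (fun s : ℝ => r.eval s * x s + (s ^ k + u.eval s) * y s)) t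
          = ((k : ℝ) + (2 - lam)) * ((k : ℝ) + (2 - lam) - 1) *
              (r.eval t * x t + (t ^ k + u.eval t) * y t)) := by
  intro k hk
  have hlam0 : lam ≠ 0 := fun h => hlam 0 (by simp [h])
  have hmu0 : (2 : ℝ) - lam ≠ 0 := fun h => hlam 4 (by push_cast; linarith)
  have m1 : ∀ t ∈ J, 2 * lam * x t = (2 * t - 1) * deriv x t + om * deriv y t := by
    intro t ht
    rw [(hsys t ht).1]
    field_simp
  have m2 : ∀ t ∈ J, 2 * (2 - lam) * om * y t = deriv x t + om * (2 * t - 1) * deriv y t := by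
    intro t ht
    rw [(hsys t ht).2]
    field_simp
  set Y : ℝ → ℝ := fun t => om * y t with hYdef
  set X2 : ℝ → ℝ := fun t => om⁻¹ * x t with hX2def
  have hYa : AnalyticOnNhd ℝ Y J := by rw [hYdef]; exact analyticOnNhd_const.mul hy
  have hX2a : AnalyticOnNhd ℝ X2 J := by rw [hX2def]; exact analyticOnNhd_const.mul hx
  have hdY : ∀ t : ℝ, deriv Y t = om * deriv y t := by
    intro t; rw [hYdef]; exact deriv_const_mul_field om
  have hdX2 : ∀ t : ℝ, deriv X2 t = om⁻¹ * deriv x t := by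
    intro t; rw [hX2def]; exact deriv_const_mul_field om⁻¹
  -- x-side system facts
  have hM1x : ∀ t ∈ J, 2 * lam * x t = (2 * t - 1) * deriv x t + deriv Y t := by
    intro t ht; rw [hdY t]; exact m1 t ht
  have hM2x : ∀ t ∈ J, 2 * (2 - lam) * Y t = deriv x t + (2 * t - 1) * deriv Y t := by
    intro t ht; rw [hdY t]; simp only [hYdef]
    linear_combination m2 t ht
  have hnex : ∀ j : ℕ, 2 * lam + 2 * (j : ℝ) - 1 ≠ 0 := by
    intro j h; exact hlam (1 - 2 * j) (by push_cast; linarith)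
  obtain ⟨p, q, hp, hq, hpq⟩ := fuchs_ladder lam (2 - lam) J hJopen x Y hx hYa hM1x hM2x
    (by ring) hnex k hk
  -- y-side system facts
  have hM1y : ∀ t ∈ J, 2 * (2 - lam) * y t = (2 * t - 1) * deriv y t + deriv X2 t := by
    intro t ht; rw [hdX2 t]
    field_simp
    linear_combination m2 t ht
  have hM2y : ∀ t ∈ J, 2 * lam * X2 t = deriv y t + (2 * t - 1) * deriv X2 t := by
    intro t ht; rw [hdX2 t]; simp only [hX2def]
    field_simp
    linear_combination m1 t ht
  have hney : ∀ j : ℕ, 2 * (2 - lam) + 2 * (j : ℝ) - 1 ≠ 0 := by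
    intro j h; exact hlam (2 * j + 3) (by push_cast; linarith)
  obtain ⟨u, r0, hu, hr0, hur⟩ := fuchs_ladder (2 - lam) lam J hJopen y X2 hy hX2a hM1y hM2y
    (by ring) hney k hk
  refine ⟨p, C om * q, C om⁻¹ * r0, u, hp, (natDegree_C_mul_le om q).trans hq,
    (natDegree_C_mul_le om⁻¹ r0).trans hr0, hu, ?_, ?_⟩
  · intro t ht
    have hfun1 : (fun s : ℝ => (s ^ k + p.eval s) * x s + (C om * q).eval s * y s)
        = fun s : ℝ => (s ^ k + p.eval s) * x s + q.eval s * Y s := by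
      funext s
      simp only [eval_mul, eval_C, hYdef]
      ring
    rw [hfun1]
    have h := hpq t ht
    simp only [hYdef] at h
    simp only [eval_mul, eval_C]
    linear_combination h
  · intro t ht
    have hfun2 : (fun s : ℝ => (C om⁻¹ * r0).eval s * x s + (s ^ k + u.eval s) * y s)
        = fun s : ℝ => (s ^ k + u.eval s) * y s + r0.eval s * X2 s := by
      funext s
      simp only [eval_mul, eval_C, hX2def]
      ring
    rw [hfun2]
    have h := hur t ht
    simp only [hX2def] at h
    simp only [eval_mul, eval_C]
    linear_combination h
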